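/- arXiv:2008.05398 — 6 statements merged into one kernel-verified Lean document; each statement's English description precedes it below -/
import Mathlib

section
/- Let r0 be a natural number and let s : ℕ → ℕ satisfy s(0) = 1, s(r) = 2·s(r−1) for 1 ≤ r ≤ r0, s(r) = 2·s(r−1) for r > r0 with r − r0 odd, and s(r) = s(r−1) + 1 for r > r0 with r − r0 even. Then s(r) = 2^r for all r ≤ r0, s(r0 + 2p) = (2^{r0} + 1)·2^p − 1 for all p ≥ 1, and s(r0 + 2p + 1) = (2^{r0} + 1)·2^{p+1} − 2 for all p ≥ 0. -/
/-!
Below the threshold `s` simply doubles. Above it, the shifted values `s + 1` at even offsets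
from `r0` and `s + 2` at odd offsets form a single sequence that doubles every two ranks:
doubling sends `s + 1` to `2 s + 2`, and the increment step sends `s + 2` to `(s + 1) + 1`.
-/

lemma eq_two_pow_of_doubling {r0 : ℕ} {s : ℕ → ℕ} (h0 : s 0 = 1)
    (hlow : ∀ r, 1 ≤ r → r ≤ r0 → s r = 2 * s (r - 1)) :
    ∀ r, r ≤ r0 → s r = 2 ^ r := by
  intro r
  induction r with
  | zero => intro _; simpa using h0
  | succ n ih =>
    intro hle
    rw [hlow (n + 1) (by omega) hle, Nat.add_sub_cancel, ih (by omega), pow_succ, mul_comm]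

section AboveThreshold

variable {r0 : ℕ} {s : ℕ → ℕ}

lemma odd_offset_eq_two_mul (hodd : ∀ r, r0 < r → Odd (r - r0) → s r = 2 * s (r - 1)) (p : ℕ) :
    s (r0 + 2 * p + 1) = 2 * s (r0 + 2 * p) :=
  hodd (r0 + 2 * p + 1) (by omega) ⟨p, by omega⟩

lemma even_offset_succ_eq (heven : ∀ r, r0 < r → Even (r - r0) → s r = s (r - 1) + 1) (p : ℕ) :
    s (r0 + 2 * (p + 1)) = s (r0 + 2 * p + 1) + 1 := by
  rw [heven (r0 + 2 * (p + 1)) (by omega) ⟨p + 1, by omega⟩,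
    show r0 + 2 * (p + 1) - 1 = r0 + 2 * p + 1 by omega]

lemma even_offset_add_one_eq (hodd : ∀ r, r0 < r → Odd (r - r0) → s r = 2 * s (r - 1))
    (heven : ∀ r, r0 < r → Even (r - r0) → s r = s (r - 1) + 1) (p : ℕ) :
    s (r0 + 2 * p) + 1 = (s r0 + 1) * 2 ^ p := by
  induction p with
  | zero => simp
  | succ p ih =>
    rw [even_offset_succ_eq heven, odd_offset_eq_two_mul hodd, pow_succ, ← mul_assoc, ← ih]
    ring

lemma odd_offset_add_two_eq (hodd : ∀ r, r0 < r → Odd (r - r0) → s r = 2 * s (r - 1))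
    (heven : ∀ r, r0 < r → Even (r - r0) → s r = s (r - 1) + 1) (p : ℕ) :
    s (r0 + 2 * p + 1) + 2 = (s r0 + 1) * 2 ^ (p + 1) := by
  rw [odd_offset_eq_two_mul hodd, pow_succ, ← mul_assoc, ← even_offset_add_one_eq hodd heven]; ring

end AboveThreshold

/-- Exact solution of the sequence-length recurrence for soft sequence heaps
    with rank threshold `r0`. -/
theorem soft_sequence_heap_length_exact (r0 : ℕ) (s : ℕ → ℕ)
    (h0 : s 0 = 1)
    (hlow : ∀ r, 1 ≤ r → r ≤ r0 → s r = 2 * s (r - 1))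
    (hodd : ∀ r, r0 < r → Odd (r - r0) → s r = 2 * s (r - 1))
    (heven : ∀ r, r0 < r → Even (r - r0) → s r = s (r - 1) + 1) :
    (∀ r, r ≤ r0 → s r = 2 ^ r) ∧
    (∀ p, 1 ≤ p → s (r0 + 2 * p) = (2 ^ r0 + 1) * 2 ^ p - 1) ∧
    (∀ p, s (r0 + 2 * p + 1) = (2 ^ r0 + 1) * 2 ^ (p + 1) - 2) := by
  have hpow := eq_two_pow_of_doubling h0 hlow
  have hr0 : s r0 = 2 ^ r0 := hpow r0 le_rfl
  refine ⟨hpow, fun p _ => ?_, fun p => ?_⟩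
  · exact Nat.eq_sub_of_add_eq (hr0 ▸ even_offset_add_one_eq hodd heven p)
  · exact Nat.eq_sub_of_add_eq (hr0 ▸ odd_offset_add_two_eq hodd heven p)
end

section
/- Let N ≥ 1 be a natural number, let ε be a real number with 0 < ε < 1, and let r0 = ⌈log₂(1/ε)⌉. Define S : ℕ → ℕ by S(r) = 2^r for r ≤ r0 and S(r) = (2^{r0} + 1)·2^{⌈(r−r0)/2⌉} for r > r0. Then ∑_{r=0}^{⌊log₂ N⌋} S(r) ≤ 32·√(N/ε). -/
/-!
Each size `S r` is at most `2 * 2 ^ ⌊(r0 + 1 + r) / 2⌋`, twice the geometric mean of `2 ^ (r0 + 1)`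
and `2 ^ r`: for `r ≤ r0` because `2 ^ r ≤ 2 ^ r0`, for `r > r0` because `2 ^ r0 + 1 ≤ 2 * 2 ^ r0`.
Summing this half-exponent geometric series up to `L = ⌊log₂ N⌋` bounds the square of the total by
`128 * 2 ^ r0 * 2 ^ L`, and `2 ^ r0 < 2 / ε`, `2 ^ L ≤ N` turn this into `16 * √(N / ε)`.
-/

open Finset

theorem pow_natCeil_logb_lt {b x : ℝ} (hb : 1 < b) (hx : 1 ≤ x) :
    b ^ ⌈Real.logb b x⌉₊ < b * x := by
  have hlog : 0 ≤ Real.logb b x := Real.logb_nonneg hb hx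
  calc b ^ ⌈Real.logb b x⌉₊ = b ^ (⌈Real.logb b x⌉₊ : ℝ) := (Real.rpow_natCast b _).symm
    _ < b ^ (Real.logb b x + 1) := Real.rpow_lt_rpow_of_exponent_lt hb (Nat.ceil_lt_add_one hlog)
    _ = b * x := by
      rw [Real.rpow_add (by linarith), Real.rpow_logb (by linarith) hb.ne' (by linarith),
        Real.rpow_one, mul_comm]

theorem sum_range_two_pow_half_add_two (n : ℕ) :
    ∑ k ∈ range n, 2 ^ (k / 2) + 2 = 2 ^ (n / 2) + 2 ^ ((n + 1) / 2) := by
  induction n with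
  | zero => simp
  | succ n ih =>
    rw [sum_range_succ, add_right_comm, ih, show (n + 1 + 1) / 2 = n / 2 + 1 by omega, pow_succ]
    ring

theorem sum_range_two_pow_half_le (n : ℕ) :
    ∑ k ∈ range n, 2 ^ (k / 2) ≤ 2 * 2 ^ ((n + 1) / 2) := by
  have hsum := sum_range_two_pow_half_add_two n
  have hmono : 2 ^ (n / 2) ≤ 2 ^ ((n + 1) / 2) := Nat.pow_le_pow_right two_pos (by omega)
  omega

namespace SoftSequenceHeap

variable {S : ℕ → ℕ} {r0 : ℕ}

theorem size_le_two_mul_two_pow_half (hSlow : ∀ r, r ≤ r0 → S r = 2 ^ r)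
    (hShigh : ∀ r, r0 < r → S r = (2 ^ r0 + 1) * 2 ^ ((r - r0 + 1) / 2)) (r : ℕ) :
    S r ≤ 2 * 2 ^ ((r0 + 1 + r) / 2) := by
  rcases le_or_gt r r0 with hr | hr
  · rw [hSlow r hr]
    calc 2 ^ r ≤ 2 ^ ((r0 + 1 + r) / 2) := Nat.pow_le_pow_right two_pos (by omega)
      _ ≤ 2 * 2 ^ ((r0 + 1 + r) / 2) := Nat.le_mul_of_pos_left _ two_pos
  · rw [hShigh r hr, show (r0 + 1 + r) / 2 = r0 + (r - r0 + 1) / 2 by omega, pow_add,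
      ← mul_assoc, two_mul]
    gcongr
    exact Nat.one_le_two_pow

theorem sq_total_size_le (hSlow : ∀ r, r ≤ r0 → S r = 2 ^ r)
    (hShigh : ∀ r, r0 < r → S r = (2 ^ r0 + 1) * 2 ^ ((r - r0 + 1) / 2)) (L : ℕ) :
    (∑ r ∈ range (L + 1), S r) ^ 2 ≤ 128 * 2 ^ r0 * 2 ^ L := by
  have hsum : ∑ r ∈ range (L + 1), S r ≤ 4 * 2 ^ ((r0 + L + 3) / 2) :=
    calc ∑ r ∈ range (L + 1), S r ≤ ∑ r ∈ range (L + 1), 2 * 2 ^ ((r0 + 1 + r) / 2) :=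
          sum_le_sum fun r _ => size_le_two_mul_two_pow_half hSlow hShigh r
      _ ≤ 2 * ∑ k ∈ range (r0 + 1 + (L + 1)), 2 ^ (k / 2) := by
          rw [← mul_sum, sum_range_add (fun k => 2 ^ (k / 2)) (r0 + 1) (L + 1)]
          exact Nat.mul_le_mul_left _ (Nat.le_add_left _ _)
      _ ≤ 4 * 2 ^ ((r0 + L + 3) / 2) := by
          have hhalf := sum_range_two_pow_half_le (r0 + 1 + (L + 1))
          rw [show r0 + 1 + (L + 1) + 1 = r0 + L + 3 by omega] at hhalf
          omega
  calc (∑ r ∈ range (L + 1), S r) ^ 2 ≤ (4 * 2 ^ ((r0 + L + 3) / 2)) ^ 2 := by gcongr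
    _ = 16 * 2 ^ ((r0 + L + 3) / 2 * 2) := by ring
    _ ≤ 16 * 2 ^ (r0 + L + 3) := by gcongr <;> omega
    _ = 128 * 2 ^ r0 * 2 ^ L := by ring

end SoftSequenceHeap

/-- Lemma 3 of the paper with an explicit constant: the total number of items in
    the sorted sequences of a soft sequence heap with error parameter `ε` and
    rank threshold `r0 = ⌈log₂ (1/ε)⌉` after `N` insertions is at most
    `32 * √(N / ε)`. -/
theorem soft_sequence_heap_total_size (N : ℕ) (hN : 1 ≤ N) (ε : ℝ)
    (hε0 : 0 < ε) (hε1 : ε < 1) (r0 : ℕ)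
    (hr0 : r0 = ⌈Real.logb 2 (1 / ε)⌉₊)
    (S : ℕ → ℕ)
    (hSlow : ∀ r, r ≤ r0 → S r = 2 ^ r)
    (hShigh : ∀ r, r0 < r → S r = (2 ^ r0 + 1) * 2 ^ ((r - r0 + 1) / 2)) :
    ((∑ r ∈ Finset.range (Nat.log 2 N + 1), S r : ℕ) : ℝ)
      ≤ 32 * Real.sqrt ((N : ℝ) / ε) := by
  set T := ∑ r ∈ Finset.range (Nat.log 2 N + 1), S r
  have hT : (T : ℝ) ^ 2 ≤ 128 * 2 ^ r0 * 2 ^ Nat.log 2 N := by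
    exact_mod_cast SoftSequenceHeap.sq_total_size_le hSlow hShigh (Nat.log 2 N)
  have hA : (2 : ℝ) ^ r0 ≤ 2 / ε := by
    have hceil := pow_natCeil_logb_lt one_lt_two (one_le_one_div hε0 hε1.le)
    rw [← hr0] at hceil
    linarith [show (2 : ℝ) * (1 / ε) = 2 / ε by ring]
  have hL : (2 : ℝ) ^ Nat.log 2 N ≤ N := by
    exact_mod_cast Nat.pow_log_le_self 2 (by omega)
  have hT16 : (T : ℝ) ≤ 16 * √(N / ε) := by
    rw [show (16 : ℝ) = √(16 ^ 2) by simp, ← Real.sqrt_mul (by positivity)]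
    apply Real.le_sqrt_of_sq_le
    calc (T : ℝ) ^ 2 ≤ 128 * (2 / ε) * N := hT.trans (by gcongr)
      _ = 16 ^ 2 * (N / ε) := by ring
  linarith [Real.sqrt_nonneg (N / ε)]
end

section
/- Let N ≥ 1 and r0 be natural numbers. Define S : ℕ → ℕ by S(r) = 2^r for r ≤ r0 and S(r) = (2^{r0} + 1)·2^{⌈(r−r0)/2⌉} for r > r0. Then ∑_{r=0}^{⌊log₂ N⌋} ⌊N/2^r⌋·S(r) ≤ N·(r0 + 7). -/
/-!
A sequence of rank `r ≤ r0` has length `2 ^ r`, so each of the first `r0 + 1` ranks contributes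
at most `N`. Above the threshold, lengths only grow like `2 ^ ⌈(r - r0) / 2⌉` while the number of
sequences halves with every rank, so the contribution of rank `r0 + k` is at most
`2N / 2 ^ ⌊k / 2⌋`; pairing consecutive ranks turns these into a geometric series of total
at most `6N`.
-/

open Finset

lemma sum_range_two_mul_add_one_div_two {M : Type*} [AddCommMonoid M] (f : ℕ → M) (m : ℕ) :
    ∑ i ∈ range (2 * m + 1), f ((i + 1) / 2) = f 0 + 2 • ∑ j ∈ range m, f (j + 1) := by
  induction m with
  | zero => simp
  | succ m ih =>
    have h_even : (2 * m + 1 + 1) / 2 = m + 1 := by omega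
    have h_odd : (2 * m + 1 + 1 + 1) / 2 = m + 1 := by omega
    rw [show 2 * (m + 1) + 1 = 2 * m + 1 + 1 + 1 by ring, sum_range_succ, sum_range_succ, ih,
      sum_range_succ, h_even, h_odd, smul_add, two_smul, two_smul]
    abel

lemma sum_range_two_mul_div_two_pow_ceil_half_le (N m : ℕ) :
    ∑ i ∈ range (2 * m + 1), 2 * N / 2 ^ ((i + 1) / 2) ≤ 6 * N := by
  have halve (j : ℕ) : 2 * N / 2 ^ (j + 1) = N / 2 ^ j := by
    rw [pow_succ', Nat.mul_div_mul_left _ _ two_pos]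
  have geom : ∑ j ∈ range m, N / 2 ^ j ≤ 2 * N := by
    simpa [mul_comm] using Nat.geom_sum_le le_rfl N m
  rw [sum_range_two_mul_add_one_div_two (fun j => 2 * N / 2 ^ j), smul_eq_mul]
  simp only [halve, pow_zero, Nat.div_one]
  omega

lemma div_two_pow_add_mul_le (N r0 k : ℕ) :
    N / 2 ^ (r0 + k) * ((2 ^ r0 + 1) * 2 ^ ((k + 1) / 2)) ≤ 2 * N / 2 ^ (k / 2) := by
  rw [Nat.le_div_iff_mul_le (by positivity)]
  have h_succ : 2 ^ r0 + 1 ≤ 2 ^ (r0 + 1) := by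
    rw [pow_succ]
    have := Nat.one_le_two_pow (n := r0)
    omega
  have h_exp : 2 ^ (r0 + 1) * 2 ^ ((k + 1) / 2) * 2 ^ (k / 2) = 2 ^ (r0 + k) * 2 := by
    rw [← pow_add, ← pow_add, ← pow_succ]
    congr 1
    omega
  calc N / 2 ^ (r0 + k) * ((2 ^ r0 + 1) * 2 ^ ((k + 1) / 2)) * 2 ^ (k / 2)
      ≤ N / 2 ^ (r0 + k) * (2 ^ (r0 + 1) * 2 ^ ((k + 1) / 2) * 2 ^ (k / 2)) := by
        rw [mul_assoc]
        gcongr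
    _ = N / 2 ^ (r0 + k) * 2 ^ (r0 + k) * 2 := by rw [h_exp, mul_assoc]
    _ ≤ 2 * N := by
        rw [mul_comm 2]
        exact Nat.mul_le_mul_right 2 (Nat.div_mul_le_self _ _)

theorem soft_sequence_heap_total_created_general (N r0 : ℕ)
    (S : ℕ → ℕ)
    (hSlow : ∀ r, r ≤ r0 → S r = 2 ^ r)
    (hShigh : ∀ r, r0 < r → S r = (2 ^ r0 + 1) * 2 ^ ((r - r0 + 1) / 2)) :
    ∑ r ∈ Finset.range (Nat.log 2 N + 1), N / 2 ^ r * S r ≤ N * (r0 + 7) := by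
  set M := Nat.log 2 N + 1
  have h_low : ∑ r ∈ range (r0 + 1), N / 2 ^ r * S r ≤ (r0 + 1) * N := by
    simpa using sum_le_card_nsmul (range (r0 + 1)) _ N fun r hr => by
      rw [hSlow r (Nat.lt_succ_iff.1 (mem_range.1 hr))]
      exact Nat.div_mul_le_self N (2 ^ r)
  have h_high : ∑ i ∈ range (2 * M + 1), N / 2 ^ (r0 + 1 + i) * S (r0 + 1 + i) ≤ 6 * N := by
    refine le_trans (sum_le_sum fun i _ => ?_) (sum_range_two_mul_div_two_pow_ceil_half_le N M)
    rw [hShigh _ (by omega), show r0 + 1 + i - r0 + 1 = i + 1 + 1 by omega,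
      show r0 + 1 + i = r0 + (i + 1) by ring]
    exact div_two_pow_add_mul_le N r0 (i + 1)
  calc ∑ r ∈ range M, N / 2 ^ r * S r
      ≤ ∑ r ∈ range (r0 + 1 + (2 * M + 1)), N / 2 ^ r * S r :=
        sum_le_sum_of_subset (range_subset_range.2 (by omega))
    _ ≤ (r0 + 1) * N + 6 * N := by
        rw [sum_range_add]
        exact add_le_add h_low h_high
    _ = N * (r0 + 7) := by ring

/-- Lemma 4 of the paper with an explicit constant: the total length of all
    sequences ever created by `N` insertions into a soft sequence heap with
    rank threshold `r0` is at most `N * (r0 + 7)`. -/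
theorem soft_sequence_heap_total_created (N r0 : ℕ) (hN : 1 ≤ N)
    (S : ℕ → ℕ)
    (hSlow : ∀ r, r ≤ r0 → S r = 2 ^ r)
    (hShigh : ∀ r, r0 < r → S r = (2 ^ r0 + 1) * 2 ^ ((r - r0 + 1) / 2)) :
    ∑ r ∈ Finset.range (Nat.log 2 N + 1), N / 2 ^ r * S r ≤ N * (r0 + 7) :=
  soft_sequence_heap_total_created_general N r0 S hSlow hShigh
end

section
/- Let N ≥ 1 and r0 be natural numbers. Define S : ℕ → ℕ by S(r) = 2^r for r ≤ r0 and S(r) = (2^{r0} + 1)·2^{⌈(r−r0)/2⌉} for r > r0. Then ∑_{r=r0+1}^{⌊log₂ N⌋} ⌊N/2^r⌋·S(r)·r ≤ 6·N·r0 + 20·N. -/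
/-!
Write `r = r0 + k` with `k ≥ 1`. Since `2 ^ r0 + 1 ≤ 2 · 2 ^ r0` and `k = ⌊k/2⌋ + ⌈k/2⌉`, the
`r`-th term is at most `2 (r0 + k) ⌊N / 2 ^ ⌊k/2⌋⌋`. Summing, `∑_{k ≥ 1} 2 ^ (-⌊k/2⌋) = 3` and
`∑_{k ≥ 1} k 2 ^ (-⌊k/2⌋) = 10`. To stay in `ℕ`, the partial sums up to `m = ⌊log₂ N⌋ - r0` are scaled by
`2 ^ ⌈m/2⌉`, which turns them into an exact finite identity.
-/

open Finset

lemma Nat.div_mul_mul_le_div (N a b : ℕ) : N / (a * b) * b ≤ N / a := by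
  rw [← Nat.div_div_eq_div_mul]
  exact Nat.div_mul_le_self _ _

lemma div_two_pow_mul_sequence_length_le (N a k : ℕ) :
    N / 2 ^ (a + k) * ((2 ^ a + 1) * 2 ^ ((k + 1) / 2)) ≤ 2 * (N / 2 ^ (k / 2)) := by
  have hrank : N / 2 ^ (a + k) * (2 ^ a + 1) ≤ 2 * (N / 2 ^ k) :=
    calc N / 2 ^ (a + k) * (2 ^ a + 1) ≤ N / (2 ^ k * 2 ^ a) * (2 * 2 ^ a) := by
          rw [← pow_add, add_comm k]
          gcongr
          have := Nat.one_le_two_pow (n := a)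
          omega
      _ ≤ 2 * (N / 2 ^ k) := by
          rw [mul_left_comm]
          exact Nat.mul_le_mul_left 2 (Nat.div_mul_mul_le_div N _ _)
  have hhalf : N / 2 ^ k * 2 ^ ((k + 1) / 2) ≤ N / 2 ^ (k / 2) := by
    rw [show 2 ^ k = 2 ^ (k / 2) * 2 ^ ((k + 1) / 2) by rw [← pow_add]; congr 1; omega]
    exact Nat.div_mul_mul_le_div N _ _
  calc N / 2 ^ (a + k) * ((2 ^ a + 1) * 2 ^ ((k + 1) / 2))
      = N / 2 ^ (a + k) * (2 ^ a + 1) * 2 ^ ((k + 1) / 2) := by ring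
    _ ≤ 2 * (N / 2 ^ k) * 2 ^ ((k + 1) / 2) := Nat.mul_le_mul_right _ hrank
    _ ≤ 2 * (N / 2 ^ (k / 2)) := by
        rw [mul_assoc]
        exact Nat.mul_le_mul_left 2 hhalf

lemma sum_Icc_mul_two_pow_sub_div_two_add (a j : ℕ) :
    ∑ k ∈ Icc 1 (2 * j), (a + k) * 2 ^ (j - k / 2) + (3 * a + 6 * j + 10)
      = (3 * a + 10) * 2 ^ j := by
  induction j with
  | zero => simp
  | succ j ih =>
    have hdouble : ∑ k ∈ Icc 1 (2 * j), (a + k) * 2 ^ (j + 1 - k / 2)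
        = 2 * ∑ k ∈ Icc 1 (2 * j), (a + k) * 2 ^ (j - k / 2) := by
      rw [mul_sum]
      refine sum_congr rfl fun k hk => ?_
      rw [show j + 1 - k / 2 = j - k / 2 + 1 by grind, pow_succ]
      ring
    rw [show 2 * (j + 1) = 2 * j + 1 + 1 by ring, sum_Icc_succ_top (by omega),
      sum_Icc_succ_top (by omega), hdouble, show j + 1 - (2 * j + 1) / 2 = 1 by omega,
      show j + 1 - (2 * j + 1 + 1) / 2 = 0 by omega, pow_succ]
    linear_combination 2 * ih

lemma sum_Icc_mul_div_two_pow_div_two_le (a N m : ℕ) :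
    ∑ k ∈ Icc 1 m, (a + k) * (N / 2 ^ (k / 2)) ≤ (3 * a + 10) * N := by
  set J := (m + 1) / 2 with hJdef
  refine Nat.le_of_mul_le_mul_left ?_ (pow_pos two_pos J)
  calc 2 ^ J * ∑ k ∈ Icc 1 m, (a + k) * (N / 2 ^ (k / 2))
      ≤ N * ∑ k ∈ Icc 1 m, (a + k) * 2 ^ (J - k / 2) := by
        rw [mul_sum, mul_sum]
        refine sum_le_sum fun k hk => ?_
        have hJ : 2 ^ J = 2 ^ (k / 2) * 2 ^ (J - k / 2) := by
          rw [← pow_add]; congr 1; grind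
        calc 2 ^ J * ((a + k) * (N / 2 ^ (k / 2)))
            = (a + k) * 2 ^ (J - k / 2) * (N / 2 ^ (k / 2) * 2 ^ (k / 2)) := by rw [hJ]; ring
          _ ≤ (a + k) * 2 ^ (J - k / 2) * N := by gcongr; exact Nat.div_mul_le_self N _
          _ = N * ((a + k) * 2 ^ (J - k / 2)) := by ring
    _ ≤ N * ∑ k ∈ Icc 1 (2 * J), (a + k) * 2 ^ (J - k / 2) := by
        gcongr
        rw [hJdef]; omega
    _ ≤ 2 ^ J * ((3 * a + 10) * N) := by
        have := sum_Icc_mul_two_pow_sub_div_two_add a J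
        nlinarith

theorem soft_sequence_heap_extract_min_cost_general (N r0 : ℕ)
    (S : ℕ → ℕ)
    (hShigh : ∀ r, r0 < r → S r = (2 ^ r0 + 1) * 2 ^ ((r - r0 + 1) / 2)) :
    ∑ r ∈ Finset.Icc (r0 + 1) (Nat.log 2 N), N / 2 ^ r * S r * r
      ≤ 6 * N * r0 + 20 * N := by
  set m := Nat.log 2 N - r0
  have hranks : Icc (r0 + 1) (Nat.log 2 N) = (Icc 1 m).map (addLeftEmbedding r0) := by
    rw [map_add_left_Icc]
    ext r
    simp only [mem_Icc]
    omega
  calc ∑ r ∈ Icc (r0 + 1) (Nat.log 2 N), N / 2 ^ r * S r * r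
      = ∑ k ∈ Icc 1 m, N / 2 ^ (r0 + k) * ((2 ^ r0 + 1) * 2 ^ ((k + 1) / 2)) * (r0 + k) := by
        rw [hranks, sum_map]
        refine sum_congr rfl fun k hk => ?_
        rw [addLeftEmbedding_apply, hShigh _ (by grind), Nat.add_sub_cancel_left]
    _ ≤ ∑ k ∈ Icc 1 m, 2 * (N / 2 ^ (k / 2)) * (r0 + k) := by
        exact sum_le_sum fun k _ =>
          Nat.mul_le_mul_right _ (div_two_pow_mul_sequence_length_le N r0 k)
    _ = 2 * ∑ k ∈ Icc 1 m, (r0 + k) * (N / 2 ^ (k / 2)) := by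
        rw [mul_sum]
        exact sum_congr rfl fun k _ => by ring
    _ ≤ 2 * ((3 * r0 + 10) * N) := by
        gcongr
        exact sum_Icc_mul_div_two_pow_div_two_le r0 N m
    _ = 6 * N * r0 + 20 * N := by ring

/-- From the proof of Lemma 5 of the paper: the total cost of suffix-min updates
    for extract-min operations on sequences of rank above the threshold `r0` is
    at most `6 * N * r0 + 20 * N`. -/
theorem soft_sequence_heap_extract_min_cost (N r0 : ℕ) (hN : 1 ≤ N)
    (S : ℕ → ℕ)
    (hSlow : ∀ r, r ≤ r0 → S r = 2 ^ r)
    (hShigh : ∀ r, r0 < r → S r = (2 ^ r0 + 1) * 2 ^ ((r - r0 + 1) / 2)) :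
    ∑ r ∈ Finset.Icc (r0 + 1) (Nat.log 2 N), N / 2 ^ r * S r * r
      ≤ 6 * N * r0 + 20 * N :=
  soft_sequence_heap_extract_min_cost_general N r0 S hShigh
end

section
/- Let r0 be a natural number and let d : ℕ → ℕ satisfy d(r) = 0 for all r ≤ r0, d(r) = 2·d(r−1) for r > r0 with r − r0 odd, and d(r) = 2·d(r−1) + 2^{⌊(r−1−r0)/2⌋} for r > r0 with r − r0 even. Then d(r) = 2^{r−r0−1} − 2^{⌈(r−r0)/2⌉−1} for all r > r0; in particular d(r) ≤ 2^{r−r0−1} for all r > r0. -/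
/-!
Writing `r = r0 + k + 1`, the correction term `2 ^ ⌊k / 2⌋` absorbs the extra summand of the
even-step recurrence: in both parities `d (r0 + k + 1) + 2 ^ ⌊k / 2⌋` doubles when `k` increases,
and it equals `1` at `k = 0`. Hence it is `2 ^ k`, which is the closed form.
-/

section

variable {r0 : ℕ} {d : ℕ → ℕ}

lemma corrupted_add_pow_succ
    (hodd : ∀ r, r0 < r → Odd (r - r0) → d r = 2 * d (r - 1))
    (heven : ∀ r, r0 < r → Even (r - r0) → d r = 2 * d (r - 1) + 2 ^ ((r - 1 - r0) / 2))
    (k : ℕ) :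
    d (r0 + (k + 1) + 1) + 2 ^ ((k + 1) / 2) = 2 * (d (r0 + k + 1) + 2 ^ (k / 2)) := by
  have hprev : r0 + (k + 1) + 1 - 1 = r0 + k + 1 := by omega
  rcases Nat.even_or_odd k with ⟨m, rfl⟩ | ⟨m, rfl⟩
  · have hstep := heven (r0 + (m + m + 1) + 1) (by omega) ⟨m + 1, by omega⟩
    have hexp : (r0 + (m + m) + 1 - r0) / 2 = m := by omega
    rw [hprev, hexp] at hstep
    rw [hstep, show (m + m + 1) / 2 = m by omega, show (m + m) / 2 = m by omega]
    ring
  · have hstep := hodd (r0 + (2 * m + 1 + 1) + 1) (by omega) ⟨m + 1, by omega⟩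
    rw [hprev] at hstep
    rw [hstep, show (2 * m + 1 + 1) / 2 = m + 1 by omega, show (2 * m + 1) / 2 = m by omega]
    ring

lemma corrupted_add_pow_eq (hlow : ∀ r, r ≤ r0 → d r = 0)
    (hodd : ∀ r, r0 < r → Odd (r - r0) → d r = 2 * d (r - 1))
    (heven : ∀ r, r0 < r → Even (r - r0) → d r = 2 * d (r - 1) + 2 ^ ((r - 1 - r0) / 2))
    (k : ℕ) :
    d (r0 + k + 1) + 2 ^ (k / 2) = 2 ^ k := by
  induction k with
  | zero =>
    have hfirst := hodd (r0 + 1) (by omega) (by simp)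
    simp [hfirst, hlow r0 le_rfl]
  | succ k ih =>
    rw [corrupted_add_pow_succ hodd heven k, ih, pow_succ']

end

/-- Lemma 7 of the paper: the bound `d` on the number of corrupted items in a
    rank-`r` sequence of a soft sequence heap with rank threshold `r0`
    satisfies `d r = 2 ^ (r - r0 - 1) - 2 ^ (⌈(r - r0) / 2⌉ - 1)` for `r > r0`;
    in particular `d r ≤ 2 ^ (r - r0 - 1)` for `r > r0`. -/
theorem soft_sequence_heap_corrupted_count (r0 : ℕ) (d : ℕ → ℕ)
    (hlow : ∀ r, r ≤ r0 → d r = 0)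
    (hodd : ∀ r, r0 < r → Odd (r - r0) → d r = 2 * d (r - 1))
    (heven : ∀ r, r0 < r → Even (r - r0) →
      d r = 2 * d (r - 1) + 2 ^ ((r - 1 - r0) / 2)) :
    (∀ r, r0 < r → d r = 2 ^ (r - r0 - 1) - 2 ^ ((r - r0 + 1) / 2 - 1)) ∧
    (∀ r, r0 < r → d r ≤ 2 ^ (r - r0 - 1)) := by
  have closed_form : ∀ r, r0 < r → d r = 2 ^ (r - r0 - 1) - 2 ^ ((r - r0 + 1) / 2 - 1) := by
    intro r hr
    obtain ⟨k, rfl⟩ := Nat.exists_eq_add_of_lt hr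
    rw [show r0 + k + 1 - r0 - 1 = k by omega, show (r0 + k + 1 - r0 + 1) / 2 - 1 = k / 2 by omega]
    exact Nat.eq_sub_of_add_eq (corrupted_add_pow_eq hlow hodd heven k)
  exact ⟨closed_form, fun r hr => (closed_form r hr).trans_le (Nat.sub_le _ _)⟩
end

section
/- Let N ≥ 1 be a natural number, let ε be a real number with 0 < ε ≤ 1, and let r0 = max(2, ⌈log₂(1/ε)⌉). Then ∑_{r=r0+1}^{⌊log₃ N⌋} ⌊N/3^r⌋·(2^{r−r0} − 1) ≤ ε·N. -/
/-!
Bounding `⌊N/3^r⌋` by `N/3^r` and `2^{r-r0} - 1` by `2^{r-r0}`, the rank-`r` term is at most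
`(N/2^{r0}) (2/3)^r`, so the whole sum is dominated by a geometric tail:
`(N/2^{r0}) ∑_{r > r0} (2/3)^r = 2N/3^{r0} ≤ N/2^{r0}`, the last step because `2·2^{r0} ≤ 3^{r0}`
once `r0 ≥ 2`. Finally `r0 ≥ log₂ (1/ε)` gives `1/2^{r0} ≤ ε`.
-/

open Finset

theorem two_mul_two_pow_le_three_pow {n : ℕ} (hn : 2 ≤ n) : 2 * 2 ^ n ≤ 3 ^ n := by
  induction n, hn using Nat.le_induction with
  | base => norm_num
  | succ n _ ih => rw [pow_succ, pow_succ]; omega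

theorem one_div_two_pow_le_of_ceil_logb_le {ε : ℝ} (hε : 0 < ε) {r : ℕ}
    (hr : ⌈Real.logb 2 (1 / ε)⌉₊ ≤ r) : 1 / (2 : ℝ) ^ r ≤ ε := by
  have hlog : Real.logb 2 (1 / ε) ≤ r := Nat.ceil_le.1 hr
  rw [Real.logb_le_iff_le_rpow one_lt_two (by positivity), Real.rpow_natCast] at hlog
  exact (one_div_le hε (by positivity)).1 hlog

theorem natCast_div_pow_mul_pow_sub_one_le (N a b : ℕ) (ha : a ≠ 0) {s r : ℕ} (hsr : s ≤ r) :
    ((N / b ^ r * (a ^ (r - s) - 1) : ℕ) : ℝ) ≤ N / a ^ s * (a / b) ^ r := by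
  have hfloor : ((N / b ^ r : ℕ) : ℝ) ≤ N / b ^ r := by exact_mod_cast Nat.cast_div_le
  have hsub : ((a ^ (r - s) - 1 : ℕ) : ℝ) ≤ (a : ℝ) ^ (r - s) := by
    exact_mod_cast Nat.sub_le _ _
  calc ((N / b ^ r * (a ^ (r - s) - 1) : ℕ) : ℝ)
      ≤ (N / b ^ r) * (a : ℝ) ^ (r - s) := by
        rw [Nat.cast_mul]
        exact mul_le_mul hfloor hsub (Nat.cast_nonneg _) (by positivity)
    _ = N / a ^ s * (a / b) ^ r := by
        rw [pow_sub₀ _ (Nat.cast_ne_zero.2 ha) hsr, div_pow]; ring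

theorem sum_div_three_pow_mul_two_pow_sub_one_le (N r0 L : ℕ) (hr0 : 2 ≤ r0) :
    ((∑ r ∈ Icc (r0 + 1) L, N / 3 ^ r * (2 ^ (r - r0) - 1) : ℕ) : ℝ) ≤ N / 2 ^ r0 := by
  have hpow : (2 : ℝ) * 2 ^ r0 ≤ 3 ^ r0 := by exact_mod_cast two_mul_two_pow_le_three_pow hr0
  rw [Nat.cast_sum]
  calc ∑ r ∈ Icc (r0 + 1) L, ((N / 3 ^ r * (2 ^ (r - r0) - 1) : ℕ) : ℝ)
      ≤ ∑ r ∈ Icc (r0 + 1) L, (N / 2 ^ r0 * (2 / 3) ^ r : ℝ) := by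
        refine sum_le_sum fun r hr => ?_
        exact_mod_cast natCast_div_pow_mul_pow_sub_one_le N 2 3 two_ne_zero
          (by grind : r0 ≤ r)
    _ = N / 2 ^ r0 * ∑ r ∈ Ico (r0 + 1) (L + 1), (2 / 3 : ℝ) ^ r := by
        rw [mul_sum, Ico_add_one_right_eq_Icc]
    _ ≤ N / 2 ^ r0 * ((2 / 3 : ℝ) ^ (r0 + 1) / (1 - 2 / 3)) := by
        gcongr
        exact geom_sum_Ico_le_of_lt_one (by norm_num) (by norm_num)
    _ = 2 * N / 3 ^ r0 := by rw [div_pow]; field_simp; ring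
    _ ≤ N / 2 ^ r0 := by
        rw [div_le_div_iff₀ (by positivity) (by positivity)]
        linarith [mul_le_mul_of_nonneg_left hpow (Nat.cast_nonneg N : (0 : ℝ) ≤ N)]

theorem ternary_soft_heap_total_corruptions_general (N : ℕ) (ε : ℝ)
    (hε0 : 0 < ε) (r0 : ℕ)
    (hr0 : r0 = max 2 ⌈Real.logb 2 (1 / ε)⌉₊) :
    ((∑ r ∈ Finset.Icc (r0 + 1) (Nat.log 3 N),
        N / 3 ^ r * (2 ^ (r - r0) - 1) : ℕ) : ℝ) ≤ ε * N := by
  have hr0_two : 2 ≤ r0 := hr0 ▸ le_max_left _ _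
  have hε : 1 / (2 : ℝ) ^ r0 ≤ ε :=
    one_div_two_pow_le_of_ceil_logb_le hε0 (hr0 ▸ le_max_right _ _)
  calc _ ≤ (N : ℝ) / 2 ^ r0 := sum_div_three_pow_mul_two_pow_sub_one_le N r0 _ hr0_two
    _ = 1 / 2 ^ r0 * N := by ring
    _ ≤ ε * N := by gcongr

/-- Section 4 of the paper: the total number of corruptions in the
    ternary-tree-based soft heap after `N` insertions, with rank threshold
    `r0 = max 2 ⌈log₂ (1/ε)⌉`, is at most `ε * N`. -/
theorem ternary_soft_heap_total_corruptions (N : ℕ) (hN : 1 ≤ N) (ε : ℝ)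
    (hε0 : 0 < ε) (hε1 : ε ≤ 1) (r0 : ℕ)
    (hr0 : r0 = max 2 ⌈Real.logb 2 (1 / ε)⌉₊) :
    ((∑ r ∈ Finset.Icc (r0 + 1) (Nat.log 3 N),
        N / 3 ^ r * (2 ^ (r - r0) - 1) : ℕ) : ℝ) ≤ ε * N :=
  ternary_soft_heap_total_corruptions_general N ε hε0 r0 hr0
end
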